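/- Let M be a 3-connected matroid with at least four elements. If G is a connected weak framework for M, then the graph G is 2-connected. -/

import Mathlib

open Set Matroid
open scoped Classical

namespace QuasiGraphicPaper

universe u v

/-- A finite multigraph: a set `V` of vertices (in an ambient type `α`), a set `E` of
edges (in an ambient type `β`), and an incidence function assigning to each edge an
unordered pair of endpoints; loop-edges and parallel edges are allowed. -/
structure Graph (α : Type u) (β : Type v) where
  V : Set α
  E : Set β
  ends : β → Sym2 α
  finV : V.Finite
  finE : E.Finite
  ends_mem : ∀ ⦃e⦄, e ∈ E → ∀ ⦃x⦄, x ∈ ends e → x ∈ V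

namespace Graph

variable {α : Type u} {β : Type v}

/-- `e` is a loop-edge of `G` at the vertex `v`. -/
def IsLoopAt (G : Graph α β) (e : β) (v : α) : Prop :=
  e ∈ G.E ∧ G.ends e = Sym2.diag v

/-- `loops_G(v)`: the set of loop-edges of `G` at `v`. -/
def loopsAt (G : Graph α β) (v : α) : Set β := {e | G.IsLoopAt e v}

/-- Two vertices are adjacent if some edge of `G` has them as its two endpoints. -/
def Adj (G : Graph α β) (u v : α) : Prop := ∃ e ∈ G.E, G.ends e = s(u, v)

/-- A graph is connected if any two of its vertices are joined by a walk.
(The graph with no vertices is connected.) -/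
def Connected (G : Graph α β) : Prop :=
  ∀ u ∈ G.V, ∀ v ∈ G.V, Relation.ReflTransGen G.Adj u v

/-- Delete a set `X` of vertices: remove the vertices in `X` and all edges meeting `X`. -/
def deleteVertices (G : Graph α β) (X : Set α) : Graph α β where
  V := G.V \ X
  E := {e ∈ G.E | ∀ x ∈ G.ends e, x ∉ X}
  ends := G.ends
  finV := G.finV.diff
  finE := G.finE.subset (sep_subset _ _)
  ends_mem := fun e he x hx => ⟨G.ends_mem he.1 hx, he.2 x hx⟩

/-- `G − v`: delete the single vertex `v`. -/
abbrev deleteVertex (G : Graph α β) (v : α) : Graph α β := G.deleteVertices {v}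

/-- `G − e`: delete the edge `e` (keeping all vertices). -/
def deleteEdge (G : Graph α β) (e : β) : Graph α β where
  V := G.V
  E := G.E \ {e}
  ends := G.ends
  finV := G.finV
  finE := G.finE.diff
  ends_mem := fun f hf x hx => G.ends_mem hf.1 hx

/-- `G[X]`: the subgraph of `G` with edge set `X` (intersected with `E(G)`) and
no isolated vertices. -/
def restrictEdges (G : Graph α β) (X : Set β) : Graph α β where
  V := {v | ∃ e ∈ X ∩ G.E, v ∈ G.ends e}
  E := X ∩ G.E
  ends := G.ends
  finV := G.finV.subset (by rintro v ⟨e, ⟨-, he⟩, hv⟩; exact G.ends_mem he hv)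
  finE := G.finE.subset inter_subset_right
  ends_mem := fun e he x hx => ⟨e, he, hx⟩

/-- The connected component of `G` containing the vertex `v`, as a graph. -/
def componentOf (G : Graph α β) (v : α) : Graph α β where
  V := {u ∈ G.V | Relation.ReflTransGen G.Adj v u}
  E := {e ∈ G.E | ∀ x ∈ G.ends e, Relation.ReflTransGen G.Adj v x}
  ends := G.ends
  finV := G.finV.subset (sep_subset _ _)
  finE := G.finE.subset (sep_subset _ _)
  ends_mem := fun e he x hx => ⟨G.ends_mem he.1 hx, he.2 x hx⟩

/-- `H` is a connected component of `G`. -/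
def IsComponentOf (H G : Graph α β) : Prop := ∃ v ∈ G.V, H = G.componentOf v

/-- The number of connected components of `G`. -/
noncomputable def ncomponents (G : Graph α β) : ℕ :=
  {H : Graph α β | H.IsComponentOf G}.ncard

/-- `G` has at most two connected components: among any three vertices, two are joined. -/
def AtMostTwoComponents (G : Graph α β) : Prop :=
  ∀ u ∈ G.V, ∀ v ∈ G.V, ∀ w ∈ G.V,
    Relation.ReflTransGen G.Adj u v ∨ Relation.ReflTransGen G.Adj u w ∨
      Relation.ReflTransGen G.Adj v w

/-- The degree of a vertex: loop-edges count twice. -/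
noncomputable def degree (G : Graph α β) (v : α) : ℕ :=
  ({e ∈ G.E | v ∈ G.ends e ∧ ¬ (G.ends e).IsDiag}).ncard +
    2 * ({e ∈ G.E | G.ends e = Sym2.diag v}).ncard

/-- `G` is a cycle: it is connected, has at least one edge, and every vertex has
degree two. -/
def IsCycleGraph (G : Graph α β) : Prop :=
  G.E.Nonempty ∧ G.Connected ∧ ∀ v ∈ G.V, G.degree v = 2

/-- `C` is (the edge set of) a cycle of `G`. -/
def CycleSet (G : Graph α β) (C : Set β) : Prop :=
  C ⊆ G.E ∧ (G.restrictEdges C).IsCycleGraph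

/-- A forest: a graph with no cycles (in particular no loop-edges). -/
def IsForest (G : Graph α β) : Prop := ∀ C, ¬ G.CycleSet C

/-- `H` is a subgraph of `G`. -/
def IsSubgraph (H G : Graph α β) : Prop := H.V ⊆ G.V ∧ H.E ⊆ G.E ∧ H.ends = G.ends

/-- `G` is `k`-connected if `G − X` is connected for every vertex set `X` with `|X| < k`. -/
def KConnected (G : Graph α β) (k : ℕ) : Prop :=
  ∀ X : Set α, X.encard < k → (G.deleteVertices X).Connected

/-- A theta: a `2`-connected graph with exactly two vertices of degree three, all
other vertices having degree two. -/
def IsTheta (H : Graph α β) : Prop :=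
  H.KConnected 2 ∧
    ∃ a ∈ H.V, ∃ b ∈ H.V, a ≠ b ∧ H.degree a = 3 ∧ H.degree b = 3 ∧
      ∀ v ∈ H.V, v ≠ a → v ≠ b → H.degree v = 2

/-- `G / e`: contract the non-loop edge `e` with endpoints `x` and `y`
(identifying `y` with `x` and deleting `e`). -/
noncomputable def contractEdge (G : Graph α β) (e : β) (x y : α) (he : e ∈ G.E)
    (hxy : G.ends e = s(x, y)) (hne : x ≠ y) : Graph α β where
  V := G.V \ {y}
  E := G.E \ {e}
  ends := fun f => (G.ends f).map (fun w => if w = y then x else w)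
  finV := G.finV.diff
  finE := G.finE.diff
  ends_mem := by
    rintro f ⟨hf, -⟩ z hz
    try dsimp only at hz
    rw [Sym2.mem_map] at hz
    obtain ⟨w, hw, rfl⟩ := hz
    by_cases hwy : w = y
    · rw [if_pos hwy]
      have hx : x ∈ G.ends e := by rw [hxy]; exact Sym2.mem_mk_left x y
      exact ⟨G.ends_mem he hx, by simp [hne]⟩
    · rw [if_neg hwy]
      exact ⟨G.ends_mem hf hw, by simp [hwy]⟩

/-- `G ∘ e`: for a loop-edge `e` at a vertex `v` which is the unique loop-edge at `v`,
delete `v` and `e`, and replace every other edge `f = vw` at `v` by a loop-edge at `w`. -/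
noncomputable def circ (G : Graph α β) (e : β) (v : α)
    (hno : ∀ f ∈ G.E, G.ends f = Sym2.diag v → f = e) : Graph α β where
  V := G.V \ {v}
  E := G.E \ {e}
  ends := fun f =>
    if h : f ∈ G.E ∧ f ≠ e ∧ v ∈ G.ends f then Sym2.diag (Sym2.Mem.other h.2.2)
    else G.ends f
  finV := G.finV.diff
  finE := G.finE.diff
  ends_mem := by
    rintro f ⟨hf, hfe⟩ z hz
    try dsimp only at hz
    have hfe' : f ≠ e := fun h' => hfe (by simp [h'])
    by_cases h : f ∈ G.E ∧ f ≠ e ∧ v ∈ G.ends f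
    · rw [dif_pos h] at hz
      have hze : z = Sym2.Mem.other h.2.2 := by
        have h2 : z ∈ s(Sym2.Mem.other h.2.2, Sym2.Mem.other h.2.2) := hz
        rw [Sym2.mem_iff] at h2
        tauto
      subst hze
      refine ⟨G.ends_mem hf (Sym2.other_mem h.2.2), ?_⟩
      simp only [mem_singleton_iff]
      intro hzv
      apply h.2.1
      apply hno f hf
      show G.ends f = s(v, v)
      rw [← Sym2.other_spec h.2.2, hzv]
    · rw [dif_neg h] at hz
      refine ⟨G.ends_mem hf hz, ?_⟩
      simp only [mem_singleton_iff]
      intro hzv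
      subst hzv
      exact h ⟨hf, hfe', hz⟩

end Graph

/-! ### Matroid notions -/

variable {α : Type u} {β : Type v}

/-- The rank `r_M(X)` of a set `X` in a matroid `M`: the maximum size of an
independent subset of `X`. -/
noncomputable def rank (M : Matroid β) (X : Set β) : ℕ :=
  (⨆ I ∈ {I : Set β | M.Indep I ∧ I ⊆ X}, I.encard).toNat

/-- `C` is a circuit of `M` : a minimal dependent set. -/
def IsCircuit (M : Matroid β) (C : Set β) : Prop :=
  M.Dep C ∧ ∀ D, D ⊂ C → M.Indep D

/-- `M \ D` : delete the set `D` from the matroid `M`. -/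
def deleteM (M : Matroid β) (D : Set β) : Matroid β := M ↾ (M.E \ D)

/-- `M / C` : contract the set `C` in the matroid `M`. -/
def contractM (M : Matroid β) (C : Set β) : Matroid β := (M✶ ↾ (M✶.E \ C))✶

/-- `G` is a weak framework for `M`: conditions (1)–(3). -/
def WeakFramework (G : Graph α β) (M : Matroid β) : Prop :=
  G.E = M.E ∧
  (∀ H : Graph α β, H.IsComponentOf G → rank M H.E ≤ H.V.ncard) ∧
  (∀ v ∈ G.V,
    M.closure (G.deleteVertex v).E ⊆ (G.deleteVertex v).E ∪ G.loopsAt v)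

/-- `G` is a framework for `M`: conditions (1)–(4). -/
def Framework (G : Graph α β) (M : Matroid β) : Prop :=
  WeakFramework G M ∧
    ∀ C, IsCircuit M C → (G.restrictEdges C).AtMostTwoComponents

/-- `M` is the cycle matroid `M(G)` of `G` : the ground set of `M` is `E(G)`, and the
circuits of `M` are exactly the edge sets of cycles of `G`. -/
def IsCycleMatroidOf (G : Graph α β) (M : Matroid β) : Prop :=
  M.E = G.E ∧ ∀ C, IsCircuit M C ↔ G.CycleSet C

/-- A matroid is graphic if it is the cycle matroid of some graph. -/
def Graphic (M : Matroid β) : Prop :=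
  ∃ (γ : Type v) (G : Graph γ β), IsCycleMatroidOf G M

/-- A matroid is quasi-graphic if it has a framework. -/
def QuasiGraphic (M : Matroid β) : Prop :=
  ∃ (γ : Type v) (G : Graph γ β), Framework G M

/-- `M` is a lift of `N` if some single-element extension `M'` of `M` satisfies
`M' \ e = M` and `M' / e = N`. -/
def IsLiftOf (M N : Matroid β) : Prop :=
  ∃ M' : Matroid (Option β), (none : Option β) ∈ M'.E ∧
    deleteM M' {none} = M.map some (Option.some_injective β).injOn ∧
    contractM M' {none} = N.map some (Option.some_injective β).injOn

/-- `M` is a lifted-graphic matroid: for some single-element extension `M'` of `M`,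
`M' / e` is graphic. -/
def LiftedGraphic (M : Matroid β) : Prop :=
  ∃ M' : Matroid (Option β), (none : Option β) ∈ M'.E ∧
    deleteM M' {none} = M.map some (Option.some_injective β).injOn ∧
    Graphic (contractM M' {none})

/-- `(M, V)` is a framed matroid: `V` is a basis of `M` and every element of `M` is
spanned by a subset of `V` with at most two elements. -/
def FramedMatroid {γ : Type u} (M : Matroid γ) (V : Set γ) : Prop :=
  M.IsBase V ∧ ∀ e ∈ M.E, ∃ S ⊆ V, S.ncard ≤ 2 ∧ e ∈ M.closure S

/-- `M` is a frame matroid: `M = M' \ V` for some framed matroid `(M', V)`. -/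
def FrameMatroid (M : Matroid β) : Prop :=
  ∃ (γ : Type v) (M' : Matroid (β ⊕ γ)) (V : Set (β ⊕ γ)),
    FramedMatroid M' V ∧
      deleteM M' V = M.map Sum.inl Sum.inl_injective.injOn

/-- `M` is `3`-connected: it has no `k`-separation for `k ≤ 2`. -/
def ThreeConnected (M : Matroid β) : Prop :=
  ∀ X ⊆ M.E, ∀ k : ℕ, k ≤ 2 → (k : ℕ∞) ≤ X.encard → (k : ℕ∞) ≤ (M.E \ X).encard →
    rank M M.E + k ≤ rank M X + rank M (M.E \ X)

/-- `M` is representable over some field. -/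
def Representable (M : Matroid β) : Prop :=
  ∃ (F : Type v) (_ : Field F) (W : Type v) (_ : AddCommGroup W) (_ : Module F W)
    (φ : β → W), ∀ I ⊆ M.E, (M.Indep I ↔ LinearIndependent F (fun x : I => φ x))

/-- A collection `B` of cycles of `G` satisfies the theta-property if there is no
theta-subgraph of `G` with exactly two of its three cycles in `B`. -/
def ThetaProperty (G : Graph α β) (B : Set (Set β)) : Prop :=
  ∀ H : Graph α β, H.IsSubgraph G → H.IsTheta →
    ∀ C1 C2 C3, H.CycleSet C1 → H.CycleSet C2 → H.CycleSet C3 →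
      C1 ≠ C2 → C2 ≠ C3 → C1 ≠ C3 → C1 ∈ B → C2 ∈ B → C3 ∈ B
/-!
If `G − v` is disconnected, split `V(G) − v` into nonempty sides `A`, `B` with no edge between
them. By condition (3) a non-loop edge at `u` is not spanned by the edges avoiding `u`. Hence
deleting a proper subset `S ⊂ V(G)` lowers the rank of the edge set by at least `|S|`: as `G` is
connected, some `u ∈ S` has a neighbour `w ∉ S`, and an edge `uw` lies in `E(G − (S − u))` but
not in the closure of `E(G − S)`; induct on `|S|`.
So the edges `E₁` avoiding `B` and the edges `E₂` meeting `B` (which all avoid `A`) satisfy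
`r(E₁) ≤ r − |B|` and `r(E₂) ≤ r − |A|`, while `r ≤ |V(G)| = |A| + |B| + 1` by condition (2).
Thus `(E₁, E₂)` is a partition into nonspanning sets with `r(E₁) + r(E₂) ≤ r + 1`, which a
`3`-connected matroid does not have.
-/

theorem _root_.Relation.ReflTransGen.exists_rel_mem_notMem {γ : Type*} {r : γ → γ → Prop}
    {S : Set γ} {a b : γ} (hab : Relation.ReflTransGen r a b) (ha : a ∈ S) (hb : b ∉ S) :
    ∃ x ∈ S, ∃ y ∉ S, r x y := by
  induction hab with
  | refl => exact absurd ha hb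
  | @tail c d _ hcd ih =>
    by_cases hc : c ∈ S
    · exact ⟨c, hc, d, hb, hcd⟩
    · exact ih hc

section Rank

variable {M : Matroid β} {X Y : Set β} {e : β}

lemma rank_eq_toNat_eRk (M : Matroid β) (X : Set β) : rank M X = (M.eRk X).toNat := by
  rw [rank]
  congr 1
  refine le_antisymm (iSup₂_le fun I hI => hI.1.encard_le_eRk_of_subset hI.2) ?_
  exact eRk_le_iff.2 fun I hIX hI => le_iSup₂ (f := fun I _ => I.encard) I ⟨hI, hIX⟩

lemma rank_mono [M.RankFinite] (h : X ⊆ Y) : rank M X ≤ rank M Y := by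
  simp only [rank_eq_toNat_eRk]
  exact ENat.toNat_le_toNat (M.eRk_mono h) (M.isRkFinite_set Y).eRk_lt_top.ne

lemma rank_insert_eq_add_one [M.RankFinite] (he : e ∈ M.E \ M.closure X) :
    rank M (insert e X) = rank M X + 1 := by
  simp only [rank_eq_toNat_eRk, eRk_insert_eq_add_one he]
  exact ENat.toNat_add (M.isRkFinite_set X).eRk_lt_top.ne ENat.one_ne_top

lemma rank_le_one_of_encard_le_one (h : X.encard ≤ 1) : rank M X ≤ 1 := by
  rw [rank_eq_toNat_eRk]
  exact ENat.toNat_le_of_le_natCast ((M.eRk_le_encard X).trans h)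

lemma ThreeConnected.rank_ground_add_two_le (h3 : ThreeConnected M) (hX : X ⊆ M.E)
    (hXne : X.Nonempty) (hYne : (M.E \ X).Nonempty) (hXr : rank M X < rank M M.E)
    (hYr : rank M (M.E \ X) < rank M M.E) :
    rank M M.E + 2 ≤ rank M X + rank M (M.E \ X) := by
  have h1 := h3 X hX 1 (by norm_num) (by simpa using hXne) (by simpa using hYne)
  by_cases hX2 : 2 ≤ X.encard
  · by_cases hY2 : 2 ≤ (M.E \ X).encard
    · exact h3 X hX 2 le_rfl hX2 hY2
    · have := rank_le_one_of_encard_le_one (M := M) (ENat.lt_two_iff.1 (not_le.1 hY2))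
      omega
  · have := rank_le_one_of_encard_le_one (M := M) (ENat.lt_two_iff.1 (not_le.1 hX2))
    omega

end Rank

namespace Graph

variable {G : Graph α β} {S : Set α} {u v w : α} {e : β}

lemma ext {G H : Graph α β} (hV : G.V = H.V) (hE : G.E = H.E) (hends : G.ends = H.ends) :
    G = H := by
  cases G; cases H; cases hV; cases hE; cases hends; rfl

lemma deleteVertices_empty (G : Graph α β) : G.deleteVertices ∅ = G :=
  ext sdiff_empty (sep_eq_self_iff_mem_true.2 fun _ _ _ _ => notMem_empty _) rfl

lemma Connected.componentOf_eq (hconn : G.Connected) (hv : v ∈ G.V) : G.componentOf v = G :=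
  ext (sep_eq_self_iff_mem_true.2 fun u hu => hconn v hv u hu)
    (sep_eq_self_iff_mem_true.2 fun _ he x hx => hconn v hv x (G.ends_mem he hx)) rfl

lemma Connected.exists_adj_of_ssubset (hconn : G.Connected) (hS : S ⊂ G.V) (hSne : S.Nonempty) :
    ∃ u ∈ S, ∃ w ∉ S, G.Adj u w := by
  obtain ⟨a, ha⟩ := hSne
  obtain ⟨b, hbV, hbS⟩ := exists_of_ssubset hS
  exact (hconn a (hS.subset ha) b hbV).exists_rel_mem_notMem ha hbS

lemma adj_of_mem_ends (he : e ∈ G.E) (ha : u ∈ G.ends e) (hb : w ∈ G.ends e) (huw : u ≠ w) :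
    G.Adj u w :=
  ⟨e, he, (Sym2.mem_and_mem_iff huw).1 ⟨ha, hb⟩⟩

lemma Adj.symm (huw : G.Adj u w) : G.Adj w u :=
  let ⟨e, he, hends⟩ := huw
  ⟨e, he, hends.trans Sym2.eq_swap⟩

structure IsVertexSeparation (G : Graph α β) (v : α) (A B : Set α) : Prop where
  nonempty_left : A.Nonempty
  nonempty_right : B.Nonempty
  disjoint : Disjoint A B
  union_eq : A ∪ B = G.V \ {v}
  not_adj : ∀ a ∈ A, ∀ b ∈ B, ¬ G.Adj a b

lemma exists_isVertexSeparation (hG : ¬ (G.deleteVertex v).Connected) :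
    ∃ A B, G.IsVertexSeparation v A B := by
  simp only [Connected, not_forall] at hG
  obtain ⟨x, hx, y, hy, hxy⟩ := hG
  set H := G.deleteVertex v
  let A := {u ∈ H.V | Relation.ReflTransGen H.Adj x u}
  refine ⟨A, H.V \ A, ⟨⟨x, hx, .refl⟩, ⟨y, hy, fun hyA => hxy hyA.2⟩, disjoint_sdiff_right,
      union_sdiff_cancel (sep_subset _ _), ?_⟩⟩
  rintro a ⟨haV, hxa⟩ b ⟨hbV, hbA⟩ ⟨e, he, hends⟩
  refine hbA ⟨hbV, hxa.tail ⟨e, ⟨he, fun z hz => ?_⟩, hends⟩⟩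
  rw [hends, Sym2.mem_iff] at hz
  rcases hz with rfl | rfl
  exacts [haV.2, hbV.2]

namespace IsVertexSeparation

variable {A B : Set α} (hsep : G.IsVertexSeparation v A B)
include hsep

lemma symm : G.IsVertexSeparation v B A :=
  ⟨hsep.nonempty_right, hsep.nonempty_left, hsep.disjoint.symm, union_comm A B ▸ hsep.union_eq,
    fun b hb a ha hba => hsep.not_adj a ha b hb hba.symm⟩

lemma ssubset_left : A ⊂ G.V := by
  have hAB := hsep.union_eq
  obtain ⟨b, hb⟩ := hsep.nonempty_right
  exact ssubset_iff_exists.2 ⟨fun a ha => (hAB ▸ mem_union_left B ha).1,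
    b, (hAB ▸ mem_union_right A hb).1, hsep.disjoint.notMem_of_mem_right hb⟩

lemma ncard_vertexSet_le : G.V.ncard ≤ A.ncard + B.ncard + 1 := by
  have hA := G.finV.subset hsep.ssubset_left.subset
  have hB := G.finV.subset hsep.symm.ssubset_left.subset
  calc G.V.ncard ≤ (insert v (A ∪ B)).ncard := by
        refine ncard_le_ncard (fun x hx => ?_) ((hA.union hB).insert v)
        rw [hsep.union_eq, insert_sdiff_singleton]
        exact mem_insert_of_mem v hx
    _ ≤ (A ∪ B).ncard + 1 := ncard_insert_le v _
    _ = A.ncard + B.ncard + 1 := by rw [ncard_union_eq hsep.disjoint hA hB]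

lemma sdiff_deleteVertices_E_subset : G.E \ (G.deleteVertices B).E ⊆ (G.deleteVertices A).E := by
  rintro e ⟨he, heB⟩
  refine ⟨he, fun a ha haA => heB ⟨he, fun b hb hbB => ?_⟩⟩
  exact hsep.not_adj a haA b hbB (adj_of_mem_ends he ha hb (hsep.disjoint.ne_of_mem haA hbB))

lemma deleteVertices_E_nonempty (hconn : G.Connected) : (G.deleteVertices B).E.Nonempty := by
  obtain ⟨u, hu, w, -, e, he, hends⟩ :=
    hconn.exists_adj_of_ssubset hsep.ssubset_left hsep.nonempty_left
  refine ⟨e, he, fun x hx hxB => ?_⟩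
  rw [hends, Sym2.mem_iff] at hx
  rcases hx with rfl | rfl
  · exact hsep.disjoint.notMem_of_mem_left hu hxB
  · exact hsep.not_adj u hu x hxB ⟨e, he, hends⟩

lemma sdiff_deleteVertices_E_nonempty (hconn : G.Connected) :
    (G.E \ (G.deleteVertices B).E).Nonempty := by
  obtain ⟨u, hu, w, -, e, he, hends⟩ :=
    hconn.exists_adj_of_ssubset hsep.symm.ssubset_left hsep.nonempty_right
  exact ⟨e, he, fun heB => heB.2 u (hends ▸ Sym2.mem_mk_left u w) hu⟩

end IsVertexSeparation

end Graph

namespace WeakFramework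

variable {G : Graph α β} {M : Matroid β} {A B S X : Set α} {u v w : α} {e : β}

lemma rank_le_ncard_of_connected (h : WeakFramework G M) (hconn : G.Connected)
    (hv : v ∈ G.V) : rank M G.E ≤ G.V.ncard := by
  have hcomp := h.2.1 _ ⟨v, hv, rfl⟩
  rwa [hconn.componentOf_eq hv] at hcomp

lemma notMem_closure_deleteVertices (h : WeakFramework G M) (he : e ∈ G.E)
    (hends : G.ends e = s(u, w)) (huw : u ≠ w) (hu : u ∈ X) :
    e ∉ M.closure (G.deleteVertices X).E := by
  intro hcl
  have hsub : (G.deleteVertices X).E ⊆ (G.deleteVertex u).E :=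
    fun f hf => ⟨hf.1, fun x hx hxu => hf.2 x hx (mem_singleton_iff.1 hxu ▸ hu)⟩
  have huends : u ∈ G.ends e := hends ▸ Sym2.mem_mk_left u w
  rcases h.2.2 u (G.ends_mem he huends) (M.closure_subset_closure hsub hcl) with hdel | hloop
  · exact hdel.2 u huends rfl
  · have hdiag : s(u, w) = s(u, u) := hends ▸ hloop.2
    exact huw (Sym2.congr_right.1 hdiag).symm

lemma rank_deleteVertices_add_one_le (h : WeakFramework G M) [M.RankFinite]
    (hu : u ∈ X) (hw : w ∉ X) (huw : G.Adj u w) :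
    rank M (G.deleteVertices X).E + 1 ≤ rank M (G.deleteVertices (X \ {u})).E := by
  obtain ⟨e, he, hends⟩ := huw
  have hne : u ≠ w := fun h => hw (h ▸ hu)
  have heE : e ∈ M.E \ M.closure (G.deleteVertices X).E :=
    ⟨h.1 ▸ he, h.notMem_closure_deleteVertices he hends hne hu⟩
  have hsub : insert e (G.deleteVertices X).E ⊆ (G.deleteVertices (X \ {u})).E := by
    refine insert_subset ⟨he, fun x hx hxX => ?_⟩
      fun f hf => ⟨hf.1, fun x hx hxX => hf.2 x hx hxX.1⟩
    rw [hends, Sym2.mem_iff] at hx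
    rcases hx with rfl | rfl
    · exact hxX.2 rfl
    · exact hw hxX.1
  rw [← rank_insert_eq_add_one heE]
  exact rank_mono hsub

lemma rank_deleteVertices_add_ncard_le (h : WeakFramework G M) [M.RankFinite]
    (hconn : G.Connected) (hS : S ⊂ G.V) :
    rank M (G.deleteVertices S).E + S.ncard ≤ rank M G.E := by
  obtain ⟨n, hn⟩ : ∃ n, S.ncard = n := ⟨_, rfl⟩
  induction n generalizing S with
  | zero =>
    obtain rfl : S = ∅ := (ncard_eq_zero (G.finV.subset hS.subset)).1 hn
    rw [G.deleteVertices_empty, hn, Nat.add_zero]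
  | succ n ih =>
    have hSne : S.Nonempty := nonempty_of_ncard_ne_zero (by omega)
    obtain ⟨u, hu, w, hw, huw⟩ := hconn.exists_adj_of_ssubset hS hSne
    have hstep := h.rank_deleteVertices_add_one_le hu hw huw
    have hcard : (S \ {u}).ncard = n := by rw [ncard_sdiff_singleton_of_mem hu, hn]; rfl
    have hrest := ih (sdiff_subset.trans_ssubset hS) hcard
    omega

lemma not_isVertexSeparation (h : WeakFramework G M) (h3 : ThreeConnected M)
    (hconn : G.Connected) : ¬ G.IsVertexSeparation v A B := by
  intro hsep
  have : M.Finite := ⟨h.1 ▸ G.finE⟩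
  obtain ⟨a, ha⟩ := hsep.nonempty_left
  have hrV := h.rank_le_ncard_of_connected hconn (hsep.ssubset_left.subset ha)
  have hrA := h.rank_deleteVertices_add_ncard_le hconn hsep.ssubset_left
  have hrB := h.rank_deleteVertices_add_ncard_le hconn hsep.symm.ssubset_left
  have hA := (ncard_pos (G.finV.subset hsep.ssubset_left.subset)).2 hsep.nonempty_left
  have hB := (ncard_pos (G.finV.subset hsep.symm.ssubset_left.subset)).2 hsep.nonempty_right
  have hrE₂ := rank_mono (M := M) hsep.sdiff_deleteVertices_E_subset
  have hsplit := h3.rank_ground_add_two_le (X := (G.deleteVertices B).E) (h.1 ▸ sep_subset _ _)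
    (hsep.deleteVertices_E_nonempty hconn) (h.1 ▸ hsep.sdiff_deleteVertices_E_nonempty hconn)
    (by rw [← h.1]; omega) (by rw [← h.1]; omega)
  rw [← h.1] at hsplit
  have hV := hsep.ncard_vertexSet_le
  omega

end WeakFramework

theorem statement15_general {α : Type u} {β : Type v} (G : Graph α β) (M : Matroid β)
    (h3 : ThreeConnected M)
    (h : WeakFramework G M) (hconn : G.Connected) :
    G.KConnected 2 := by
  intro X hX
  obtain rfl | ⟨v, rfl⟩ := encard_le_one_iff_eq.1 (ENat.lt_two_iff.1 (by exact_mod_cast hX))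
  · rwa [G.deleteVertices_empty]
  · by_contra hdisc
    obtain ⟨A, B, hsep⟩ := G.exists_isVertexSeparation hdisc
    exact h.not_isVertexSeparation h3 hconn hsep

/-- Let `M` be a `3`-connected matroid with at least four elements. If
`G` is a connected weak framework for `M`, then the graph `G` is `2`-connected. -/
theorem statement15 {α : Type u} {β : Type v} (G : Graph α β) (M : Matroid β)
    (h3 : ThreeConnected M) (hcard : 4 ≤ M.E.encard)
    (h : WeakFramework G M) (hconn : G.Connected) :
    G.KConnected 2 :=
  statement15_general G M h3 h hconn

end QuasiGraphicPaper
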